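/- Let C ⊆ GF(4)ⁿ be a GF(4)-linear code that is self-orthogonal with respect to the trace inner product, and let S be a set of coordinates such that every codeword of C has an even number of nonzero entries in the coordinates of S. Then the code obtained from C by deleting the coordinates in S (the image of C under the projection onto the coordinates outside S) is a GF(4)-linear code of length n − |S| that is self-orthogonal with respect to the trace inner product. -/

import Mathlib

/-!
On `GF(4)` the cube map sends every nonzero element to `1`, so `∑_{j ∈ S} uⱼ³` is the weight of `u`
on `S` modulo 2. In characteristic 2, `a b² + a² b = (a + b)³ + a³ + b³`, hence the part of the
trace inner product of two codewords carried by `S` is a sum of three such weights, all even.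
It therefore vanishes, and the trace inner product of the punctured words, which is the part
carried by the complement of `S`, equals the full trace inner product, which is `0`.
-/

noncomputable section

open Finset Polynomial

/-- The field `GF(4)` with four elements. -/
abbrev F4 := GaloisField 2 2

/-- The trace inner product `u∗v = Σⱼ (uⱼ v̄ⱼ + ūⱼ vⱼ)` on `GF(4)ⁿ`,
where conjugation is `x̄ = x²`.  It takes values in the prime subfield. -/
def trIP {n : ℕ} (u v : Fin n → F4) : F4 :=
  ∑ j, (u j * (v j) ^ 2 + (u j) ^ 2 * v j)

/-- The Hamming weight of a vector in `GF(4)ⁿ`. -/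
def wt {n : ℕ} (u : Fin n → F4) : ℕ := Set.ncard {j | u j ≠ 0}

/-- The dual of a code with respect to the trace inner product. -/
def trDual {n : ℕ} (C : Set (Fin n → F4)) : Set (Fin n → F4) :=
  {u | ∀ v ∈ C, trIP u v = 0}

theorem FiniteField.sum_pow_card_sub_one {K ι : Type*} [Field K] [Fintype K]
    (s : Finset ι) (u : ι → K) [DecidablePred fun j => u j ≠ 0] :
    ∑ j ∈ s, u j ^ (Fintype.card K - 1) = #{j ∈ s | u j ≠ 0} := by
  rw [natCast_card_filter]
  refine sum_congr rfl fun j _ => ?_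
  by_cases hj : u j = 0
  · simp [hj, Nat.sub_ne_zero_of_lt Fintype.one_lt_card]
  · simp [hj, FiniteField.pow_card_sub_one_eq_one]

theorem CharTwo.mul_sq_add_sq_mul {R : Type*} [CommRing R] [CharP R 2] (a b : R) :
    a * b ^ 2 + a ^ 2 * b = (a + b) ^ 3 + a ^ 3 + b ^ 3 := by
  linear_combination -(a * b ^ 2 + a ^ 2 * b + a ^ 3 + b ^ 3) * CharTwo.two_eq_zero (R := R)

namespace F4

theorem card : Nat.card F4 = 4 :=
  GaloisField.card 2 2 two_ne_zero

variable {ι : Type*} [DecidableEq F4]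

theorem sum_pow_three (s : Finset ι) (u : ι → F4) :
    ∑ j ∈ s, u j ^ 3 = #{j ∈ s | u j ≠ 0} := by
  let := Fintype.ofFinite F4
  rw [← FiniteField.sum_pow_card_sub_one, ← Nat.card_eq_fintype_card, card]

theorem sum_pow_three_eq_zero_of_even (s : Finset ι) (u : ι → F4) (hu : Even #{j ∈ s | u j ≠ 0}) :
    ∑ j ∈ s, u j ^ 3 = 0 := by
  rw [sum_pow_three]
  exact natCast_eq_zero_of_even_of_two_eq_zero hu CharTwo.two_eq_zero

theorem sum_trIP_eq_zero_of_even (s : Finset ι) (u v : ι → F4)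
    (hu : Even #{j ∈ s | u j ≠ 0}) (hv : Even #{j ∈ s | v j ≠ 0})
    (huv : Even #{j ∈ s | u j + v j ≠ 0}) :
    ∑ j ∈ s, (u j * v j ^ 2 + u j ^ 2 * v j) = 0 := by
  simp_rw [CharTwo.mul_sq_add_sq_mul, sum_add_distrib]
  rw [sum_pow_three_eq_zero_of_even s (fun j => u j + v j) huv,
    sum_pow_three_eq_zero_of_even s u hu, sum_pow_three_eq_zero_of_even s v hv, add_zero, add_zero]

end F4

theorem trIP_funLeft_eq_sum_compl {n m : ℕ} (S : Finset (Fin n)) (e : Fin m ≃ {j // j ∉ S})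
    (u v : Fin n → F4) :
    trIP (LinearMap.funLeft F4 F4 (fun i => (e i : Fin n)) u)
        (LinearMap.funLeft F4 F4 (fun i => (e i : Fin n)) v) =
      ∑ j ∈ Sᶜ, (u j * v j ^ 2 + u j ^ 2 * v j) := by
  rw [sum_subtype Sᶜ (fun _ => mem_compl)]
  exact e.sum_comp fun j => u j * v j ^ 2 + u j ^ 2 * v j

/-- Deleting from a self-orthogonal GF(4)-linear code a set S of coordinates
which every codeword meets evenly yields a self-orthogonal GF(4)-linear code
of length n - |S|. -/
theorem delete_even_coords_selforth (n : ℕ) (C : Submodule F4 (Fin n → F4))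
    (hso : ∀ u ∈ C, ∀ v ∈ C, trIP u v = 0)
    (S : Finset (Fin n))
    (heven : ∀ u ∈ C, Even (Set.ncard {j | j ∈ S ∧ u j ≠ 0}))
    (e : Fin (n - S.card) ≃ {j : Fin n // j ∉ S}) :
    ∀ u ∈ Submodule.map (LinearMap.funLeft F4 F4 (fun i => (e i : Fin n))) C,
      ∀ v ∈ Submodule.map (LinearMap.funLeft F4 F4 (fun i => (e i : Fin n))) C,
        trIP u v = 0 := by
  classical
  have heven' : ∀ u ∈ C, Even #{j ∈ S | u j ≠ 0} := fun u hu => by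
    rw [← Set.ncard_coe_finset, coe_filter]
    exact heven u hu
  rintro _ ⟨u, hu, rfl⟩ _ ⟨v, hv, rfl⟩
  have hS := F4.sum_trIP_eq_zero_of_even S u v (heven' u hu) (heven' v hv)
    (heven' (u + v) (C.add_mem hu hv))
  rw [trIP_funLeft_eq_sum_compl, ← hso u hu v hv, trIP, ← sum_add_sum_compl S, hS, zero_add]
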